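/- For every integer n ≥ 1, the n-th Taylor coefficient of A at 0 equals the explicit alternating sum Aₙ = ∑_{j=1}^{n−1} (3^j·C(2j,j)/((2j−1)·16^{j+1}))·(−1/32)^{n−1−j} + (1/4)·(−1/32)^{n−1}. -/

import Mathlib

open Real

/-- The function `A(x) = 1 + 3x/(10 + √(4 - 3x))`. -/
noncomputable def Afun (x : ℝ) : ℝ := 1 + 3 * x / (10 + Real.sqrt (4 - 3 * x))

/-- The `n`-th Taylor coefficient of `A` at `0`. -/
noncomputable def Acoef (n : ℕ) : ℝ := iteratedDeriv n Afun 0 / (Nat.factorial n)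

/-!
Rationalising the denominator gives `(32 + x) A(x) = 32 + x (11 - √(4 - 3x))` for `x ≤ 4/3`, and
`y = √(4 - 3x)` solves `2 (4 - 3x) y' = -3 y`. Multiplication by a linear polynomial shifts Taylor
coefficients by one place, so both identities become first-order recurrences. The one for the
square root, together with the recurrence for central binomial coefficients, shows that its `j`-th
coefficient is `-32 · 3ʲ C(2j,j) / ((2j - 1) 16ʲ⁺¹)` for `j ≥ 1`; the one for `A` then reads
`Aₙ₊₁ = -Aₙ / 32 + 3ⁿ C(2n,n) / ((2n - 1) 16ⁿ⁺¹)` for `n ≥ 1`, with `A₁ = 1/4`, and unrolling it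
gives the sum.
-/

open Filter Topology Finset

section TaylorCoeff

variable {𝕜 : Type*} [NontriviallyNormedField 𝕜]

noncomputable def taylorCoeff (f : 𝕜 → 𝕜) (n : ℕ) : 𝕜 := iteratedDeriv n f 0 / n.factorial

@[simp]
lemma taylorCoeff_zero (f : 𝕜 → 𝕜) : taylorCoeff f 0 = f 0 := by
  simp [taylorCoeff]

lemma Filter.EventuallyEq.taylorCoeff_eq {f g : 𝕜 → 𝕜} (h : f =ᶠ[𝓝 0] g) (n : ℕ) :
    taylorCoeff f n = taylorCoeff g n := by
  rw [taylorCoeff, taylorCoeff, h.iteratedDeriv_eq]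

lemma taylorCoeff_deriv [CharZero 𝕜] (f : 𝕜 → 𝕜) (n : ℕ) :
    taylorCoeff (deriv f) n = (n + 1) * taylorCoeff f (n + 1) := by
  have : (n.factorial : 𝕜) ≠ 0 := Nat.cast_ne_zero.2 n.factorial_ne_zero
  simp only [taylorCoeff, iteratedDeriv_succ', Nat.factorial_succ, Nat.cast_mul, Nat.cast_succ]
  field_simp

lemma taylorCoeff_const_add_succ (c : 𝕜) (f : 𝕜 → 𝕜) (n : ℕ) :
    taylorCoeff (fun x => c + f x) (n + 1) = taylorCoeff f (n + 1) := by
  rw [taylorCoeff, taylorCoeff, iteratedDeriv_const_add n.succ_pos]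

lemma taylorCoeff_const_sub_succ (c : 𝕜) (f : 𝕜 → 𝕜) (n : ℕ) :
    taylorCoeff (fun x => c - f x) (n + 1) = -taylorCoeff f (n + 1) := by
  rw [taylorCoeff, taylorCoeff, iteratedDeriv_const_sub n.succ_pos, iteratedDeriv_neg, neg_div]

lemma taylorCoeff_const_mul (c : 𝕜) (f : 𝕜 → 𝕜) (n : ℕ) :
    taylorCoeff (fun x => c * f x) n = c * taylorCoeff f n := by
  rw [taylorCoeff, taylorCoeff, iteratedDeriv_const_mul_field, mul_div_assoc]

lemma taylorCoeff_id_mul [CharZero 𝕜] {f : 𝕜 → 𝕜} {n : ℕ} (hf : ContDiffAt 𝕜 (n + 1) f 0) :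
    taylorCoeff (fun x => x * f x) (n + 1) = taylorCoeff f n := by
  have : (n.factorial : 𝕜) ≠ 0 := Nat.cast_ne_zero.2 n.factorial_ne_zero
  rw [taylorCoeff, taylorCoeff, iteratedDeriv_fun_mul contDiffAt_fun_id hf, sum_eq_single 1]
  · simp [iteratedDeriv_fun_id_zero, Nat.factorial_succ]
    field_simp
  · intro i _ hi
    simp [iteratedDeriv_fun_id_zero, hi]
  · simp

lemma taylorCoeff_linear_mul [CharZero 𝕜] (c d : 𝕜) {f : 𝕜 → 𝕜} {n : ℕ}
    (hf : ContDiffAt 𝕜 (n + 1) f 0) :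
    taylorCoeff (fun x => (c + d * x) * f x) (n + 1) =
      c * taylorCoeff f (n + 1) + d * taylorCoeff f n := by
  have hsplit : (fun x => (c + d * x) * f x) = fun x => c * f x + d * (x * f x) := by
    ext x
    ring
  rw [hsplit, taylorCoeff,
    iteratedDeriv_fun_add (contDiffAt_const.mul hf) (contDiffAt_const.mul (contDiffAt_fun_id.mul hf)),
    add_div, ← taylorCoeff, ← taylorCoeff, taylorCoeff_const_mul, taylorCoeff_const_mul,
    taylorCoeff_id_mul hf]

end TaylorCoeff

lemma eq_sum_of_succ_eq_mul_add {R : Type*} [CommSemiring R] {a c : ℕ → R} {r : R}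
    (h : ∀ n, a (n + 1) = r * a n + c (n + 1)) (n : ℕ) :
    a n = ∑ j ∈ Icc 1 n, c j * r ^ (n - j) + a 0 * r ^ n := by
  induction n with
  | zero => simp
  | succ n ih =>
    rw [h, ih, sum_Icc_succ_top (by omega), Nat.sub_self, pow_zero, mul_one, mul_add, mul_sum,
      sum_congr rfl fun j hj => ?_]
    · ring
    · rw [Nat.sub_add_comm (mem_Icc.1 hj).2, pow_succ]
      ring

namespace Afun

noncomputable def root (x : ℝ) : ℝ := √(4 - 3 * x)

lemma root_nonneg (x : ℝ) : 0 ≤ root x :=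
  Real.sqrt_nonneg _

lemma root_pos {x : ℝ} (hx : x < 4 / 3) : 0 < root x :=
  Real.sqrt_pos.2 (by linarith)

lemma root_sq {x : ℝ} (hx : x ≤ 4 / 3) : root x ^ 2 = 4 - 3 * x :=
  Real.sq_sqrt (by linarith)

lemma root_zero : root 0 = 2 := by
  rw [root, show (4 : ℝ) - 3 * 0 = 2 ^ 2 by norm_num, Real.sqrt_sq zero_le_two]

lemma contDiffAt_root {n : WithTop ℕ∞} {x : ℝ} (hx : x < 4 / 3) : ContDiffAt ℝ n root x :=
  (contDiffAt_const.sub (contDiffAt_const.mul contDiffAt_id)).sqrt (by rw [id]; linarith)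

lemma hasDerivAt_root {x : ℝ} (hx : x < 4 / 3) : HasDerivAt root (-3 / (2 * root x)) x := by
  have := (((hasDerivAt_id x).const_mul 3).const_sub 4).sqrt (by rw [id]; linarith)
  unfold root
  simpa using this

lemma linear_mul_deriv_root {x : ℝ} (hx : x < 4 / 3) :
    (8 + -6 * x) * (-3 / (2 * root x)) = -3 * root x := by
  have := root_pos hx
  field_simp
  linear_combination 2 * root_sq hx.le

lemma taylorCoeff_root_one : taylorCoeff root 1 = -3 / 4 := by
  have h : deriv root 0 = -3 / (2 * root 0) := (hasDerivAt_root (by norm_num)).deriv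
  rw [root_zero] at h
  norm_num [taylorCoeff, h]

lemma taylorCoeff_root_recurrence (n : ℕ) :
    8 * (n + 2) * taylorCoeff root (n + 2) = 3 * (2 * n + 1) * taylorCoeff root (n + 1) := by
  have hnhds : ∀ᶠ x in 𝓝 (0 : ℝ), x < 4 / 3 := Iio_mem_nhds (by norm_num)
  -- Working with the explicit form of `deriv root` makes its smoothness at `0` immediate.
  have hderiv (k : ℕ) :
      taylorCoeff (fun x => -3 / (2 * root x)) k = (k + 1) * taylorCoeff root (k + 1) := by
    have h : deriv root =ᶠ[𝓝 0] fun x => -3 / (2 * root x) :=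
      hnhds.mono fun x hx => (hasDerivAt_root hx).deriv
    rw [← taylorCoeff_deriv, h.taylorCoeff_eq]
  have hsmooth : ContDiffAt ℝ (n + 1) (fun x => -3 / (2 * root x)) 0 :=
    contDiffAt_const.div (contDiffAt_const.mul (contDiffAt_root (by norm_num)))
      (by rw [root_zero]; norm_num)
  have hode : (fun x => (8 + -6 * x) * (-3 / (2 * root x))) =ᶠ[𝓝 0] fun x => -3 * root x :=
    hnhds.mono fun x hx => linear_mul_deriv_root hx
  replace hode := hode.taylorCoeff_eq (n + 1)
  rw [taylorCoeff_linear_mul 8 (-6) hsmooth, taylorCoeff_const_mul, hderiv, hderiv] at hode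
  push_cast at hode
  linear_combination hode

noncomputable def summandCoeff (j : ℕ) : ℝ :=
  3 ^ j * (Nat.choose (2 * j) j : ℝ) / ((2 * (j : ℝ) - 1) * 16 ^ (j + 1))

lemma summandCoeff_succ_succ (n : ℕ) :
    8 * (n + 2) * summandCoeff (n + 2) = 3 * (2 * n + 1) * summandCoeff (n + 1) := by
  have hbinom : ((n + 2 : ℕ) : ℝ) * (2 * (n + 2)).choose (n + 2) =
      2 * (2 * (n + 1) + 1 : ℕ) * (2 * (n + 1)).choose (n + 1) := by
    exact_mod_cast Nat.succ_mul_centralBinom_succ (n + 1)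
  have h1 : (2 * ((n : ℝ) + 1) - 1) ≠ 0 := by linarith [n.cast_nonneg (α := ℝ)]
  have h2 : (2 * ((n : ℝ) + 2) - 1) ≠ 0 := by linarith [n.cast_nonneg (α := ℝ)]
  simp only [summandCoeff]
  push_cast at hbinom ⊢
  field_simp
  linear_combination (8 * 3 ^ (n + 2) * (2 * (n : ℝ) + 1) * 16 ^ (n + 2)) * hbinom

lemma taylorCoeff_root_succ (n : ℕ) : taylorCoeff root (n + 1) = -32 * summandCoeff (n + 1) := by
  induction n with
  | zero => norm_num [taylorCoeff_root_one, summandCoeff]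
  | succ n ih =>
    have hn : (8 * ((n : ℝ) + 2)) ≠ 0 := by positivity
    apply mul_left_cancel₀ hn
    rw [taylorCoeff_root_recurrence, ih, ← mul_assoc _ (-32 : ℝ), mul_comm _ (-32 : ℝ), mul_assoc,
      ← summandCoeff_succ_succ]
    ring

end Afun

open Afun

lemma linear_mul_Afun {x : ℝ} (hx : x ≤ 4 / 3) : (32 + x) * Afun x = 32 + x * (11 - root x) := by
  have h : 10 + root x ≠ 0 := by linarith [root_nonneg x]
  change (32 + x) * (1 + 3 * x / (10 + root x)) = _
  field_simp
  linear_combination x * root_sq hx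

lemma contDiffAt_Afun {n : WithTop ℕ∞} : ContDiffAt ℝ n Afun 0 := by
  have h : 10 + root 0 ≠ 0 := by rw [root_zero]; norm_num
  exact contDiffAt_const.add ((contDiffAt_const.mul contDiffAt_id).div
    (contDiffAt_const.add (contDiffAt_root (by norm_num))) h)

lemma Acoef_eq_taylorCoeff : Acoef = taylorCoeff Afun := rfl

lemma Acoef_recurrence (n : ℕ) :
    32 * Acoef (n + 1) + Acoef n = taylorCoeff (fun x => 11 - root x) n := by
  have h : (fun x => (32 + 1 * x) * Afun x) =ᶠ[𝓝 0] fun x => 32 + x * (11 - root x) :=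
    eventually_of_mem (Iic_mem_nhds (by norm_num : (0 : ℝ) < 4 / 3)) fun x hx => by
      simpa only [one_mul] using linear_mul_Afun hx
  have hsmooth : ContDiffAt ℝ (n + 1) (fun x => 11 - root x) 0 :=
    contDiffAt_const.sub (contDiffAt_root (by norm_num))
  replace h := h.taylorCoeff_eq (n + 1)
  rwa [taylorCoeff_linear_mul _ _ contDiffAt_Afun, taylorCoeff_const_add_succ,
    taylorCoeff_id_mul hsmooth, one_mul, ← Acoef_eq_taylorCoeff] at h

lemma Acoef_one : Acoef 1 = 1 / 4 := by
  have h := Acoef_recurrence 0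
  have h0 : Acoef 0 = 1 := by simp [Acoef_eq_taylorCoeff, Afun]
  rw [h0, taylorCoeff_zero, root_zero] at h
  linarith

lemma Acoef_succ_succ (n : ℕ) :
    Acoef (n + 2) = -1 / 32 * Acoef (n + 1) + summandCoeff (n + 1) := by
  have h := Acoef_recurrence (n + 1)
  rw [taylorCoeff_const_sub_succ, taylorCoeff_root_succ] at h
  linarith

theorem Acoef_explicit_formula (n : ℕ) (hn : 1 ≤ n) :
    Acoef n =
      (∑ j ∈ Finset.Icc 1 (n - 1),
          (3 ^ j * (Nat.choose (2 * j) j : ℝ) / ((2 * (j : ℝ) - 1) * 16 ^ (j + 1))) *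
            (-1 / 32) ^ (n - 1 - j)) +
        (1 / 4) * (-1 / 32 : ℝ) ^ (n - 1) := by
  obtain ⟨k, rfl⟩ := Nat.exists_eq_add_of_le' hn
  have h := eq_sum_of_succ_eq_mul_add (a := fun k => Acoef (k + 1)) Acoef_succ_succ k
  rw [Acoef_one] at h
  simp only [Nat.add_sub_cancel]
  exact h
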